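/- Let n, d ≥ 1, L > 0, β > 0, and x₁,…,x_n ∈ ℝ^d with ‖xᵢ‖₂ ≤ 2L. For a label vector y ∈ {0,1}ⁿ and w ∈ ℝ^d, let θ̂(y,w) ∈ Θ_B be the unique minimizer over Θ_B of F_y(θ) + (β/2)‖θ‖₂² + wᵀθ, where F_y(θ) = −Σ_{i=1}^n [ yᵢ·log σ(xᵢᵀθ) + (1−yᵢ)·log(1−σ(xᵢᵀθ)) ], and let μ_y be the pushforward of the Gaussian measure N(0, σ²·I_d) on ℝ^d under w ↦ θ̂(y,w). If ε > 0, δ ∈ (0,1), and σ ≥ L·√(8·log(2/δ) + 4ε)/ε, then for all y, y' ∈ {0,1}ⁿ differing in exactly one coordinate and all measurable S ⊆ ℝ^d, μ_y(S) ≤ e^ε·μ_{y'}(S) + δ. -/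

import Mathlib

open MeasureTheory ProbabilityTheory Real

/-- The sigmoid function `σ(z) = 1/(1+e^{−z})`. -/
noncomputable def sigmoid (z : ℝ) : ℝ := 1 / (1 + Real.exp (-z))

/-- The parameter set `Θ_B = {θ ∈ ℝ^d : ⟨1, θ⟩ = 0, ‖θ‖ ≤ B}`. -/
def Theta (d : ℕ) (B : ℝ) : Set (EuclideanSpace ℝ (Fin d)) :=
  {θ | (∑ j, θ j) = 0 ∧ ‖θ‖ ≤ B}

/-- The isotropic Gaussian measure `N(0, σ²·I_d)` on `ℝ^d`, i.e. the product of `d`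
centered real Gaussians of variance `σ²`. -/
noncomputable def gaussianPi (d : ℕ) (σ : ℝ) : Measure (EuclideanSpace ℝ (Fin d)) :=
  (Measure.pi fun _ : Fin d => gaussianReal 0 ⟨σ^2, sq_nonneg σ⟩).map
    (MeasurableEquiv.toLp 2 (Fin d → ℝ))

/-- Negative log-likelihood `F_y(θ) = −Σᵢ [yᵢ log σ(xᵢᵀθ) + (1−yᵢ) log(1−σ(xᵢᵀθ))]`. -/
noncomputable def nll (d n : ℕ) (x : Fin n → EuclideanSpace ℝ (Fin d))
    (y : Fin n → Bool) (θ : EuclideanSpace ℝ (Fin d)) : ℝ :=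
  -∑ i, (if y i then Real.log (_root_.sigmoid (inner ℝ (x i) θ))
         else Real.log (1 - _root_.sigmoid (inner ℝ (x i) θ)))

/-- The perturbed objective `F_y(θ) + (β/2)‖θ‖² + wᵀθ`. -/
noncomputable def perturbedObj (d n : ℕ) (x : Fin n → EuclideanSpace ℝ (Fin d))
    (y : Fin n → Bool) (β : ℝ) (w θ : EuclideanSpace ℝ (Fin d)) : ℝ :=
  nll d n x y θ + (β/2) * ‖θ‖^2 + inner ℝ w θ

/-!
Flipping the label `yᵢ` adds the linear term `⟪±xᵢ, θ⟫` to the negative log-likelihood, which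
can be absorbed into the noise: `θ̂(y, w) = θ̂(y', w - v)` with `‖v‖ = ‖xᵢ‖ ≤ 2L`, by uniqueness of
the minimizer of the strongly convex objective. So `μ_y` and `μ_{y'}` are images under the same
map `θ̂(y', ·)` of `N(0, σ²I)` translated by `-v` and of `N(0, σ²I)` itself, and it suffices to
prove the Gaussian-mechanism bound for a translation `u` with `‖u‖ ≤ Δ`. The translated Gaussian
has density `exp ℓ` with respect to the centred one, where `ℓ w = (⟪u, w⟫ - ‖u‖² / 2) / σ²`; on
`{ℓ ≤ ε}` this density is at most `e^ε`, and `{ℓ > ε}` has mass at most `δ` by the sub-Gaussian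
tail bound for `⟪u, w⟫`.
-/

open scoped NNReal ENNReal RealInnerProductSpace

lemma convexOn_finsetSum {E ι : Type*} [AddCommMonoid E] [Module ℝ E] {s : Set E}
    (hs : Convex ℝ s) (t : Finset ι) {f : ι → E → ℝ} (hf : ∀ i ∈ t, ConvexOn ℝ s (f i)) :
    ConvexOn ℝ s (∑ i ∈ t, f i) :=
  Finset.sum_induction f (ConvexOn ℝ s) (fun _ _ => ConvexOn.add) (convexOn_const 0 hs) hf

lemma ProbabilityTheory.HasSubgaussianMGF.mono {Ω : Type*} {mΩ : MeasurableSpace Ω}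
    {μ : Measure Ω} {X : Ω → ℝ} {c c' : ℝ≥0} (h : HasSubgaussianMGF X c μ) (hc : c ≤ c') :
    HasSubgaussianMGF X c' μ :=
  ⟨h.integrable_exp_mul, fun t => (h.mgf_le t).trans (Real.exp_le_exp.2 (by gcongr))⟩

lemma MeasureTheory.Measure.pi_withDensity_ofReal {ι : Type*} [Fintype ι] {α : ι → Type*}
    [∀ i, MeasurableSpace (α i)] (μ : ∀ i, Measure (α i)) [∀ i, IsProbabilityMeasure (μ i)]
    {f : ∀ i, α i → ℝ} (hf : ∀ i, Measurable (f i)) :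
    Measure.pi (fun i => (μ i).withDensity fun a => ENNReal.ofReal (f i a))
      = (Measure.pi μ).withDensity fun ω => ∏ i, ENNReal.ofReal (f i (ω i)) := by
  refine Measure.pi_eq fun s hs => ?_
  have hbox : (Set.univ.pi s).indicator (fun ω => ∏ i, ENNReal.ofReal (f i (ω i)))
      = fun ω => ∏ i, (s i).indicator (fun a => ENNReal.ofReal (f i a)) (ω i) := by
    funext ω
    by_cases hω : ω ∈ Set.univ.pi s
    · simp [Set.indicator_of_mem hω, Set.indicator_of_mem (hω _ (Set.mem_univ _))]
    · obtain ⟨i, hi⟩ : ∃ i, ω i ∉ s i := by simpa [Set.mem_univ_pi] using hω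
      rw [Set.indicator_of_notMem hω]
      exact (Finset.prod_eq_zero (Finset.mem_univ i) (Set.indicator_of_notMem hi _)).symm
  have hmeas (i : ι) : Measurable ((s i).indicator fun a => ENNReal.ofReal (f i a)) :=
    (hf i).ennreal_ofReal.indicator (hs i)
  rw [withDensity_apply _ (MeasurableSet.univ_pi hs),
    ← lintegral_indicator (MeasurableSet.univ_pi hs), hbox,
    lintegral_prod_eq_prod_lintegral_of_indepFun _ _ (iIndepFun_pi fun i => (hmeas i).aemeasurable)
      fun i => (hmeas i).comp (measurable_pi_apply i)]
  refine Finset.prod_congr rfl fun i _ => ?_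
  rw [withDensity_apply _ (hs i), ← lintegral_indicator (hs i),
    (measurePreserving_eval μ i).lintegral_comp (hmeas i)]

lemma sigmoid_eq_real_sigmoid : _root_.sigmoid = Real.sigmoid :=
  funext fun _ => one_div _

lemma neg_log_sigmoid_neg (t : ℝ) :
    -Real.log (Real.sigmoid (-t)) = -Real.log (Real.sigmoid t) + t := by
  rw [← Real.sigmoid_mul_rexp_neg, Real.log_mul (Real.sigmoid_pos t).ne' (Real.exp_pos _).ne',
    Real.log_exp]
  ring

lemma convexOn_neg_log_sigmoid : ConvexOn ℝ Set.univ fun z => -Real.log (Real.sigmoid z) := by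
  have hderiv (z : ℝ) :
      HasDerivAt (fun z => -Real.log (Real.sigmoid z)) (Real.sigmoid z - 1) z := by
    have h := ((Real.hasDerivAt_sigmoid z).log (Real.sigmoid_pos z).ne').neg
    rwa [mul_div_cancel_left₀ _ (Real.sigmoid_pos z).ne', neg_sub] at h
  refine Monotone.convexOn_univ_of_deriv (fun z => (hderiv z).differentiableAt) ?_
  rw [funext fun z => (hderiv z).deriv]
  exact fun a b hab => sub_le_sub_right (Real.sigmoid_monotone hab) 1

section Objective

variable {d n : ℕ} {x : Fin n → EuclideanSpace ℝ (Fin d)} {y : Fin n → Bool}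

lemma nll_eq_sum (θ : EuclideanSpace ℝ (Fin d)) :
    nll d n x y θ = ∑ i, -Real.log (Real.sigmoid ⟪if y i then x i else -x i, θ⟫) := by
  rw [nll, ← Finset.sum_neg_distrib]
  refine Finset.sum_congr rfl fun i _ => ?_
  cases y i <;> simp [sigmoid_eq_real_sigmoid, ← Real.sigmoid_neg, inner_neg_left]

lemma convexOn_nll : ConvexOn ℝ Set.univ (nll d n x y) := by
  rw [funext nll_eq_sum, ← Finset.sum_fn]
  exact convexOn_finsetSum convex_univ _ fun i _ =>
    convexOn_neg_log_sigmoid.comp_linearMap (innerₛₗ ℝ _)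

lemma nll_update_not (i : Fin n) (θ : EuclideanSpace ℝ (Fin d)) :
    nll d n x (Function.update y i (!y i)) θ
      = nll d n x y θ + ⟪if y i then x i else -x i, θ⟫ := by
  simp only [nll_eq_sum, ← Finset.add_sum_erase _ _ (Finset.mem_univ i), Function.update_self]
  have hrest : ∀ j ∈ Finset.univ.erase i, Function.update y i (!y i) j = y j :=
    fun j hj => Function.update_of_ne (Finset.ne_of_mem_erase hj) _ _
  rw [Finset.sum_congr rfl fun j hj => by rw [hrest j hj]]
  have hflip : (if !y i then x i else -x i) = -(if y i then x i else -x i) := by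
    cases y i <;> simp
  rw [hflip, inner_neg_left, neg_log_sigmoid_neg]
  ring

lemma perturbedObj_update_not (i : Fin n) (β : ℝ) (w θ : EuclideanSpace ℝ (Fin d)) :
    perturbedObj d n x (Function.update y i (!y i)) β (w - if y i then x i else -x i) θ
      = perturbedObj d n x y β w θ := by
  rw [perturbedObj, perturbedObj, nll_update_not, inner_sub_left]
  ring

lemma strictConvexOn_perturbedObj {β : ℝ} (hβ : 0 < β) (w : EuclideanSpace ℝ (Fin d)) :
    StrictConvexOn ℝ Set.univ (perturbedObj d n x y β w) := by
  refine (strongConvexOn_iff_convex.2 ?_).strictConvexOn hβ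
  simp only [perturbedObj, add_sub_cancel_right, add_right_comm _ (β / 2 * _)]
  exact convexOn_nll.add ((innerₛₗ ℝ w).convexOn convex_univ)

end Objective

lemma convex_Theta (d : ℕ) (B : ℝ) : Convex ℝ (Theta d B) := by
  have hsum : IsLinearMap ℝ fun θ : EuclideanSpace ℝ (Fin d) => ∑ j, θ j :=
    ⟨fun a b => by simp [Finset.sum_add_distrib], fun c a => by simp [Finset.mul_sum]⟩
  have hTheta : Theta d B = {θ | ∑ j, θ j = 0} ∩ Metric.closedBall 0 B := by
    ext θ; simp [Theta]
  rw [hTheta]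
  exact (convex_hyperplane hsum 0).inter (convex_closedBall 0 B)

lemma minimizer_update_not {d n : ℕ} {x : Fin n → EuclideanSpace ℝ (Fin d)}
    {s : Set (EuclideanSpace ℝ (Fin d))} (hs : Convex ℝ s) {β : ℝ} (hβ : 0 < β)
    (that : (Fin n → Bool) → EuclideanSpace ℝ (Fin d) → EuclideanSpace ℝ (Fin d))
    (hmin : ∀ y w, that y w ∈ s ∧
      ∀ θ ∈ s, perturbedObj d n x y β w (that y w) ≤ perturbedObj d n x y β w θ)
    (y : Fin n → Bool) (i : Fin n) (w : EuclideanSpace ℝ (Fin d)) :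
    that y w = that (Function.update y i (!y i)) (w - if y i then x i else -x i) := by
  obtain ⟨hmem, hle⟩ := hmin y w
  obtain ⟨hmem', hle'⟩ := hmin (Function.update y i (!y i)) (w - if y i then x i else -x i)
  simp only [perturbedObj_update_not] at hle'
  exact ((strictConvexOn_perturbedObj hβ w).subset (Set.subset_univ s) hs).eq_of_isMinOn
    (isMinOn_iff.2 hle) (isMinOn_iff.2 hle') hmem hmem'

section Privacy

variable {α β : Type*} [MeasurableSpace α] [MeasurableSpace β] {ε δ : ℝ}

def DPClose (ε δ : ℝ) (μ ν : Measure α) : Prop :=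
  ∀ A, MeasurableSet A → μ A ≤ ENNReal.ofReal (Real.exp ε) * ν A + ENNReal.ofReal δ

lemma DPClose.map {μ ν : Measure α} (h : DPClose ε δ μ ν) {f : α → β} (hf : Measurable f) :
    DPClose ε δ (μ.map f) (ν.map f) := fun A hA => by
  simpa only [Measure.map_apply hf hA] using h _ (hf hA)

lemma dpClose_withDensity_exp (ν : Measure α) {ℓ : α → ℝ} (hℓ : Measurable ℓ)
    (htail : ν.withDensity (fun a => ENNReal.ofReal (Real.exp (ℓ a))) {a | ε < ℓ a}
      ≤ ENNReal.ofReal δ) :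
    DPClose ε δ (ν.withDensity fun a => ENNReal.ofReal (Real.exp (ℓ a))) ν := by
  intro A hA
  set G := {a | ℓ a ≤ ε}
  have hG : MeasurableSet G := measurableSet_le hℓ measurable_const
  have hbody : ν.withDensity (fun a => ENNReal.ofReal (Real.exp (ℓ a))) (A ∩ G)
      ≤ ENNReal.ofReal (Real.exp ε) * ν A := by
    rw [withDensity_apply _ (hA.inter hG)]
    calc ∫⁻ a in A ∩ G, ENNReal.ofReal (Real.exp (ℓ a)) ∂ν
        ≤ ∫⁻ _ in A ∩ G, ENNReal.ofReal (Real.exp ε) ∂ν :=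
          setLIntegral_mono measurable_const fun a ha =>
            ENNReal.ofReal_le_ofReal (Real.exp_le_exp.2 ha.2)
      _ ≤ ENNReal.ofReal (Real.exp ε) * ν A := by
          rw [setLIntegral_const]
          exact mul_le_mul_right (measure_mono Set.inter_subset_left) _
  have hdiff : A \ G ⊆ {a | ε < ℓ a} := fun a ha => not_le.1 (show ¬ ℓ a ≤ ε from ha.2)
  exact (measure_le_inter_add_sdiff _ A G).trans
    (add_le_add hbody ((measure_mono hdiff).trans htail))

end Privacy

lemma gaussianReal_eq_withDensity_exp {V : ℝ≥0} (hV : V ≠ 0) (m : ℝ) :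
    gaussianReal m V
      = (gaussianReal 0 V).withDensity
          fun t => ENNReal.ofReal (Real.exp ((m * t - m ^ 2 / 2) / V)) := by
  rw [gaussianReal_of_var_ne_zero _ hV, gaussianReal_of_var_ne_zero _ hV,
    ← withDensity_mul _ (measurable_gaussianPDF _ _) (by fun_prop)]
  congr 1
  funext t
  rw [Pi.mul_apply, gaussianPDF, gaussianPDF, ← ENNReal.ofReal_mul (gaussianPDFReal_nonneg _ _ _),
    gaussianPDFReal, gaussianPDFReal, mul_assoc _ (Real.exp _), ← Real.exp_add]
  congr 3
  field_simp
  ring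

lemma pi_gaussianReal_map_add {ι : Type*} [Fintype ι] (V : ℝ≥0) (u : ι → ℝ) :
    (Measure.pi fun _ : ι => gaussianReal 0 V).map (· + u)
      = Measure.pi fun j => gaussianReal (u j) V := by
  have h := Measure.pi_map_pi (μ := fun _ : ι => gaussianReal 0 V) (f := fun j t => t + u j)
    fun _ => by fun_prop
  simp only [gaussianReal_map_add_const, zero_add] at h
  exact h

lemma hasSubgaussianMGF_const_mul_gaussianReal (V : ℝ≥0) (r : ℝ) :
    HasSubgaussianMGF (fun t => r * t) (‖r‖₊ ^ 2 * V) (gaussianReal 0 V) where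
  integrable_exp_mul s := by
    simpa only [mul_assoc] using integrable_exp_mul_gaussianReal (s * r)
  mgf_le s := by
    rw [mgf_const_mul, mgf_fun_id_gaussianReal]
    exact le_of_eq (by simp; ring)

lemma pi_gaussianReal_sum_mul_ge_le {ι : Type*} [Fintype ι] (V : ℝ≥0) (u : ι → ℝ) {Δ a : ℝ}
    (hu : ∑ j, u j ^ 2 ≤ Δ ^ 2) (ha : 0 ≤ a) :
    (Measure.pi fun _ : ι => gaussianReal 0 V) {w | a ≤ ∑ j, u j * w j}
      ≤ ENNReal.ofReal (Real.exp (-a ^ 2 / (2 * (V * Δ ^ 2)))) := by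
  set ν := Measure.pi fun _ : ι => gaussianReal 0 V
  have hcoord (j : ι) : HasSubgaussianMGF (fun w : ι → ℝ => u j * w j) (‖u j‖₊ ^ 2 * V) ν := by
    have h := hasSubgaussianMGF_const_mul_gaussianReal V (u j)
    rw [← (measurePreserving_eval (fun _ : ι => gaussianReal 0 V) j).map_eq] at h
    exact h.of_map (measurable_pi_apply j).aemeasurable
  have hsum := (HasSubgaussianMGF.sum_of_iIndepFun (s := Finset.univ)
    (iIndepFun_pi (X := fun j (t : ℝ) => u j * t) fun _ => by fun_prop) fun j _ => hcoord j).mono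
    (c' := ‖Δ‖₊ ^ 2 * V) (by
      rw [← NNReal.coe_le_coe]
      push_cast
      simpa [← Finset.sum_mul] using mul_le_mul_of_nonneg_right hu V.2)
  rw [← ofReal_measureReal]
  refine ENNReal.ofReal_le_ofReal ((hsum.measure_ge_le ha).trans_eq ?_)
  simp [mul_comm]

lemma dpClose_pi_gaussianReal_map_add {ι : Type*} [Fintype ι] {V : ℝ≥0} (u : ι → ℝ)
    {Δ ε δ : ℝ} (hΔ : 0 < Δ) (hu : ∑ j, u j ^ 2 ≤ Δ ^ 2) (hε : Δ ^ 2 / 2 ≤ ε * V)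
    (hδ : Real.exp (-(ε * V - Δ ^ 2 / 2) ^ 2 / (2 * (V * Δ ^ 2))) ≤ δ) :
    DPClose ε δ ((Measure.pi fun _ : ι => gaussianReal 0 V).map (· + u))
      (Measure.pi fun _ : ι => gaussianReal 0 V) := by
  have hV : V ≠ 0 := by
    rintro rfl
    simp only [NNReal.coe_zero, mul_zero] at hε
    nlinarith
  set ℓ : (ι → ℝ) → ℝ := fun w => (∑ j, u j * w j - (∑ j, u j ^ 2) / 2) / V
  have hℓ : Measurable ℓ := by fun_prop
  have hdens : (Measure.pi fun _ : ι => gaussianReal 0 V).map (· + u)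
      = (Measure.pi fun _ : ι => gaussianReal 0 V).withDensity
          fun w => ENNReal.ofReal (Real.exp (ℓ w)) := by
    rw [pi_gaussianReal_map_add, funext fun j => gaussianReal_eq_withDensity_exp hV (u j),
      Measure.pi_withDensity_ofReal _ fun _ => by fun_prop]
    congr 1
    funext w
    rw [← ENNReal.ofReal_prod_of_nonneg fun _ _ => (Real.exp_pos _).le, ← Real.exp_sum,
      ← Finset.sum_div, Finset.sum_sub_distrib, ← Finset.sum_div]
  rw [hdens]
  refine dpClose_withDensity_exp _ hℓ ?_
  rw [← hdens, Measure.map_apply (measurable_add_const u) (measurableSet_lt measurable_const hℓ)]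
  refine (measure_mono fun w hw => ?_).trans
    ((pi_gaussianReal_sum_mul_ge_le V u hu (sub_nonneg.2 hε)).trans (ENNReal.ofReal_le_ofReal hδ))
  have hw : ε < (∑ j, u j * (w j + u j) - (∑ j, u j ^ 2) / 2) / V := hw
  rw [lt_div_iff₀ (by positivity)] at hw
  simp only [mul_add, Finset.sum_add_distrib, ← sq] at hw
  show ε * V - Δ ^ 2 / 2 ≤ ∑ j, u j * w j
  linarith

lemma dpClose_gaussianPi_map_add {d : ℕ} {σ : ℝ} (u : EuclideanSpace ℝ (Fin d))
    {Δ ε δ : ℝ} (hΔ : 0 < Δ) (hu : ‖u‖ ≤ Δ) (hε : Δ ^ 2 / 2 ≤ ε * σ ^ 2)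
    (hδ : Real.exp (-(ε * σ ^ 2 - Δ ^ 2 / 2) ^ 2 / (2 * (σ ^ 2 * Δ ^ 2))) ≤ δ) :
    DPClose ε δ ((gaussianPi d σ).map (· + u)) (gaussianPi d σ) := by
  have hsum : ∑ j, u j ^ 2 ≤ Δ ^ 2 := by
    rw [← EuclideanSpace.real_norm_sq_eq]
    exact pow_le_pow_left₀ (norm_nonneg u) hu 2
  have h := (dpClose_pi_gaussianReal_map_add (V := ⟨σ ^ 2, sq_nonneg σ⟩) u.ofLp hΔ hsum hε hδ).map
    (MeasurableEquiv.toLp 2 (Fin d → ℝ)).measurable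
  rw [Measure.map_map (by fun_prop) (by fun_prop)] at h
  rwa [gaussianPi, Measure.map_map (by fun_prop) (by fun_prop)]

lemma gaussian_noise_conditions {L ε δ σ : ℝ} (hL : 0 < L) (hε : 0 < ε) (hδ : δ ∈ Set.Ioo 0 1)
    (hσ : L * Real.sqrt (8 * Real.log (2 / δ) + 4 * ε) / ε ≤ σ) :
    (2 * L) ^ 2 / 2 ≤ ε * σ ^ 2 ∧
      Real.exp (-(ε * σ ^ 2 - (2 * L) ^ 2 / 2) ^ 2 / (2 * (σ ^ 2 * (2 * L) ^ 2))) ≤ δ := by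
  obtain ⟨hδ0, hδ1⟩ := hδ
  set l := Real.log (2 / δ)
  have hl : 0 ≤ l := Real.log_nonneg (by rw [le_div_iff₀ hδ0]; linarith)
  have hsq : L ^ 2 * (8 * l + 4 * ε) ≤ ε ^ 2 * σ ^ 2 := by
    have h := pow_le_pow_left₀ (by positivity) ((div_le_iff₀' hε).1 hσ) 2
    rwa [mul_pow, mul_pow, Real.sq_sqrt (by positivity)] at h
  have hσ0 : 0 < σ := lt_of_lt_of_le (by positivity) hσ
  have hvar : 2 * L ^ 2 ≤ ε * σ ^ 2 := by nlinarith
  refine ⟨by linarith, ?_⟩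
  have hexp : l ≤ (ε * σ ^ 2 - (2 * L) ^ 2 / 2) ^ 2 / (2 * (σ ^ 2 * (2 * L) ^ 2)) := by
    rw [le_div_iff₀ (by positivity)]
    nlinarith [mul_le_mul_of_nonneg_left hsq (sq_nonneg σ), pow_pos hL 4]
  calc _ ≤ Real.exp (-l) := Real.exp_le_exp.2 (by rw [neg_div]; linarith)
    _ = δ / 2 := by rw [Real.exp_neg, Real.exp_log (by positivity), inv_div]
    _ ≤ δ := by linarith

theorem objective_perturbation_label_dp
    (n d : ℕ) (L B β σv ε δ : ℝ)
    (x : Fin n → EuclideanSpace ℝ (Fin d))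
    (hL : 0 < L) (hβ : 0 < β)
    (hx : ∀ i, ‖x i‖ ≤ 2 * L)
    (that : (Fin n → Bool) → EuclideanSpace ℝ (Fin d) → EuclideanSpace ℝ (Fin d))
    (hmin : ∀ y w, that y w ∈ Theta d B ∧
      ∀ θ ∈ Theta d B, perturbedObj d n x y β w (that y w) ≤ perturbedObj d n x y β w θ)
    (hmeas : ∀ y, Measurable (that y))
    (hε : 0 < ε) (hδ : δ ∈ Set.Ioo (0:ℝ) 1)
    (hσ : L * Real.sqrt (8 * Real.log (2/δ) + 4 * ε) / ε ≤ σv)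
    (y y' : Fin n → Bool) (i : Fin n) (hy : y' = Function.update y i (!(y i)))
    (S : Set (EuclideanSpace ℝ (Fin d))) (hS : MeasurableSet S) :
    ((gaussianPi d σv).map (that y)) S ≤
      ENNReal.ofReal (Real.exp ε) * ((gaussianPi d σv).map (that y')) S
        + ENNReal.ofReal δ := by
  subst hy
  set v := if y i then x i else -x i
  have hshift : that y = that (Function.update y i (!y i)) ∘ (· + -v) := funext fun w => by
    rw [Function.comp_apply, ← sub_eq_add_neg]
    exact minimizer_update_not (convex_Theta d B) hβ that hmin y i w
  have hv : ‖-v‖ ≤ 2 * L := by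
    rw [norm_neg]
    by_cases h : y i <;> simp [v, h, hx i]
  obtain ⟨hvar, hδσ⟩ := gaussian_noise_conditions hL hε hδ hσ
  have hdp := (dpClose_gaussianPi_map_add (-v) (by positivity) hv hvar hδσ).map
    (hmeas (Function.update y i (!y i)))
  rw [Measure.map_map (hmeas _) (by fun_prop), ← hshift] at hdp
  exact hdp S hS
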